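/- For every m ≥ 1, the function ε_{m,n}(x,t) satisfies the m-th order heat equation (∂/∂t − Δ_x)^m ε_{m,n}(x,t) = 0 for all t > 0 and x ∈ ℝⁿ. -/

import Mathlib

open Real MeasureTheory Filter Topology Set

/-!
For `t > 0`, `ε_{m,n}` is a constant multiple of `t ^ (a - n/2) * exp (-‖x‖² / 4t)` with
`a = m - 1`. The time derivative of this function is the function times
`(a - n/2)/t + ‖x‖²/4t²`, its Laplacian is the function times `‖x‖²/4t² - n/2t`, so the heat
operator multiplies it by `a/t`, i.e. sends it to `a` times the member with exponent `a - 1`.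
Hence `◇^m` produces the factor `a (a - 1) ⋯ (a - m + 1)`, which vanishes for `a = m - 1`.
-/

noncomputable def eps (n m : ℕ) (x : EuclideanSpace ℝ (Fin n)) (t : ℝ) : ℝ :=
  t ^ (m - 1) * (4 * Real.pi * t) ^ (-(n : ℝ) / 2) * Real.exp (-‖x‖ ^ 2 / (4 * t))

noncomputable def lap {n : ℕ} (u : EuclideanSpace ℝ (Fin n) → ℝ)
    (x : EuclideanSpace ℝ (Fin n)) : ℝ :=
  ∑ i : Fin n, iteratedDeriv 2 (fun s : ℝ => u (x + s • EuclideanSpace.single i 1)) 0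

/-- The heat operator ◇ = ∂/∂t − Δ_x. -/
noncomputable def heatOp {n : ℕ} (u : EuclideanSpace ℝ (Fin n) → ℝ → ℝ) :
    EuclideanSpace ℝ (Fin n) → ℝ → ℝ :=
  fun x t => deriv (u x) t - lap (fun y => u y t) x

/-- The adjoint heat operator ◇⁺ = −∂/∂τ − Δ_ξ. -/
noncomputable def adjOp {n : ℕ} (w : EuclideanSpace ℝ (Fin n) → ℝ → ℝ) :
    EuclideanSpace ℝ (Fin n) → ℝ → ℝ :=
  fun ξ τ => -deriv (w ξ) τ - lap (fun y => w y τ) ξ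

noncomputable def heatPow (n : ℕ) (a : ℝ) (x : EuclideanSpace ℝ (Fin n)) (t : ℝ) : ℝ :=
  t ^ (a - n / 2) * exp (-‖x‖ ^ 2 / (4 * t))

lemma iteratedDeriv_two_exp_quadratic (α β γ : ℝ) :
    iteratedDeriv 2 (fun s : ℝ => exp (α + β * s + γ * s ^ 2)) 0 = exp α * (β ^ 2 + 2 * γ) := by
  have hquad (s : ℝ) : HasDerivAt (fun s : ℝ => α + β * s + γ * s ^ 2) (β + 2 * γ * s) s := by
    have := ((hasDerivAt_id s).const_mul β).const_add α |>.add
      ((hasDerivAt_pow 2 s).const_mul γ)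
    exact this.congr_deriv (by simp; ring)
  have hderiv : deriv (fun s : ℝ => exp (α + β * s + γ * s ^ 2))
      = fun s => exp (α + β * s + γ * s ^ 2) * (β + 2 * γ * s) :=
    funext fun s => (hquad s).exp.deriv
  have hlin : HasDerivAt (fun s : ℝ => β + 2 * γ * s) (2 * γ) 0 := by
    simpa using ((hasDerivAt_id (0 : ℝ)).const_mul (2 * γ)).const_add β
  rw [iteratedDeriv_succ, iteratedDeriv_one, hderiv]
  exact ((hquad 0).exp.mul hlin).deriv.trans (by simp; ring)

lemma EuclideanSpace.norm_add_smul_single_one_sq {n : ℕ} (x : EuclideanSpace ℝ (Fin n))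
    (i : Fin n) (s : ℝ) :
    ‖x + s • EuclideanSpace.single i (1 : ℝ)‖ ^ 2 = ‖x‖ ^ 2 + 2 * s * x i + s ^ 2 := by
  rw [norm_add_sq_real, real_inner_smul_right, norm_smul]
  simp only [EuclideanSpace.inner_single_right, conj_trivial, one_mul, norm_eq_abs,
    PiLp.norm_single, norm_one, mul_one, sq_abs]
  ring

lemma lap_const_mul {n : ℕ} (c : ℝ) (u : EuclideanSpace ℝ (Fin n) → ℝ)
    (x : EuclideanSpace ℝ (Fin n)) : lap (fun y => c * u y) x = c * lap u x := by
  simp only [lap, iteratedDeriv_const_mul_field, Finset.mul_sum]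

lemma lap_gaussian {n : ℕ} (t : ℝ) (x : EuclideanSpace ℝ (Fin n)) :
    lap (fun y => exp (-‖y‖ ^ 2 / (4 * t))) x
      = exp (-‖x‖ ^ 2 / (4 * t)) * (‖x‖ ^ 2 / (4 * t ^ 2) - n / (2 * t)) := by
  have hcoord (i : Fin n) :
      iteratedDeriv 2 (fun s : ℝ => exp (-‖x + s • EuclideanSpace.single i 1‖ ^ 2 / (4 * t))) 0
        = exp (-‖x‖ ^ 2 / (4 * t)) * (x i ^ 2 / (4 * t ^ 2) - 1 / (2 * t)) := by
    simp_rw [EuclideanSpace.norm_add_smul_single_one_sq]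
    have hslice := iteratedDeriv_two_exp_quadratic (-‖x‖ ^ 2 / (4 * t)) (-x i / (2 * t))
      (-1 / (4 * t))
    convert hslice using 3
    · ring_nf
    · ring
  rw [lap, Finset.sum_congr rfl fun i _ => hcoord i, ← Finset.mul_sum, Finset.sum_sub_distrib,
    ← Finset.sum_div, ← EuclideanSpace.real_norm_sq_eq, Finset.sum_const, Finset.card_univ,
    Fintype.card_fin, nsmul_eq_mul]
  ring

lemma hasDerivAt_heatPow {n : ℕ} (a : ℝ) (x : EuclideanSpace ℝ (Fin n)) {t : ℝ} (ht : 0 < t) :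
    HasDerivAt (heatPow n a x)
      (heatPow n a x t * ((a - n / 2) / t + ‖x‖ ^ 2 / (4 * t ^ 2))) t := by
  have hpow : HasDerivAt (fun s : ℝ => s ^ (a - n / 2)) ((a - n / 2) * t ^ (a - n / 2 - 1)) t :=
    hasDerivAt_rpow_const (Or.inl ht.ne')
  have hexponent : HasDerivAt (fun s : ℝ => -‖x‖ ^ 2 / (4 * s)) (‖x‖ ^ 2 / (4 * t ^ 2)) t := by
    rw [show (fun s : ℝ => -‖x‖ ^ 2 / (4 * s)) = fun s => -‖x‖ ^ 2 / 4 * s⁻¹ from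
      funext fun s => by ring]
    exact ((hasDerivAt_inv ht.ne').const_mul _).congr_deriv (by field_simp)
  refine (hpow.mul hexponent.exp).congr_deriv ?_
  rw [heatPow, rpow_sub ht _ 1, rpow_one]
  field_simp

lemma lap_heatPow {n : ℕ} (a t : ℝ) (x : EuclideanSpace ℝ (Fin n)) :
    lap (fun y => heatPow n a y t) x
      = heatPow n a x t * (‖x‖ ^ 2 / (4 * t ^ 2) - n / (2 * t)) := by
  rw [heatPow, mul_assoc, ← lap_gaussian]
  exact lap_const_mul _ _ x

lemma heatOp_const_mul {n : ℕ} (c : ℝ) (u : EuclideanSpace ℝ (Fin n) → ℝ → ℝ)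
    (x : EuclideanSpace ℝ (Fin n)) (t : ℝ) :
    heatOp (fun y s => c * u y s) x t = c * heatOp u x t := by
  simp only [heatOp, deriv_const_mul_field', lap_const_mul, mul_sub]

lemma heatOp_heatPow {n : ℕ} (a : ℝ) (x : EuclideanSpace ℝ (Fin n)) {t : ℝ} (ht : 0 < t) :
    heatOp (heatPow n a) x t = a * heatPow n (a - 1) x t := by
  rw [heatOp, (hasDerivAt_heatPow a x ht).deriv, lap_heatPow, heatPow, heatPow,
    show a - 1 - (n : ℝ) / 2 = a - n / 2 - 1 by ring, rpow_sub ht _ 1, rpow_one]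
  field_simp
  ring

lemma heatOp_congr_of_pos {n : ℕ} {u v : EuclideanSpace ℝ (Fin n) → ℝ → ℝ}
    (h : ∀ y s, 0 < s → u y s = v y s) (x : EuclideanSpace ℝ (Fin n)) {t : ℝ} (ht : 0 < t) :
    heatOp u x t = heatOp v x t := by
  have hderiv : deriv (u x) t = deriv (v x) t :=
    EventuallyEq.deriv_eq (eventually_gt_nhds ht |>.mono fun s hs => h x s hs)
  simp only [heatOp, hderiv, funext fun y => h y t ht]

lemma heatOp_iterate_congr_of_pos {n : ℕ} {u v : EuclideanSpace ℝ (Fin n) → ℝ → ℝ}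
    (h : ∀ y s, 0 < s → u y s = v y s) (k : ℕ) :
    ∀ x t, 0 < t → heatOp^[k] u x t = heatOp^[k] v x t := by
  induction k with
  | zero => exact h
  | succ k ih =>
    intro x t ht
    simp only [Function.iterate_succ_apply']
    exact heatOp_congr_of_pos ih x ht

lemma heatOp_iterate_const_mul_heatPow (n : ℕ) (c a : ℝ) (k : ℕ) :
    ∀ x t, 0 < t → heatOp^[k] (fun y s => c * heatPow n a y s) x t
      = c * (descPochhammer ℝ k).eval a * heatPow n (a - k) x t := by
  induction k with
  | zero => intro x t ht; simp
  | succ k ih =>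
    intro x t ht
    rw [Function.iterate_succ_apply', heatOp_congr_of_pos ih x ht, heatOp_const_mul,
      heatOp_heatPow _ x ht, descPochhammer_succ_eval]
    rw [Nat.cast_succ, sub_sub]
    ring

lemma eps_eq_heatPow (n m : ℕ) (x : EuclideanSpace ℝ (Fin n)) {t : ℝ} (ht : 0 < t) :
    eps n m x t = (4 * π) ^ (-(n : ℝ) / 2) * heatPow n ((m - 1 : ℕ) : ℝ) x t := by
  rw [eps, heatPow, mul_rpow (by positivity) ht.le, ← rpow_natCast t (m - 1),
    sub_eq_add_neg _ ((n : ℝ) / 2), rpow_add ht, neg_div]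
  ring

theorem stmt_2 (n m : ℕ) (hm : 1 ≤ m) (x : EuclideanSpace ℝ (Fin n)) (t : ℝ) (ht : 0 < t) :
    (heatOp)^[m] (eps n m) x t = 0 := by
  rw [heatOp_iterate_congr_of_pos (fun y s hs => eps_eq_heatPow n m y hs) m x t ht,
    heatOp_iterate_const_mul_heatPow n _ _ m x t ht,
    descPochhammer_eval_coe_nat_of_lt (by omega : m - 1 < m)]
  simp
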